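/- Let n1, n2, n3 be positive integers, set m = max{n1, n2, n3}, n = median{n1, n2, n3}, k = min{n1, n2, n3}, and let P be a real number with P ≥ mn/k² (and P ≥ 1). If F is a finite set of triples (i1, i2, i3) with 1 ≤ i1 ≤ n1, 1 ≤ i2 ≤ n2, 1 ≤ i3 ≤ n3 and |F| ≥ n1·n2·n3 / P, then |φ_A(F)| + |φ_B(F)| + |φ_C(F)| ≥ 3·(mnk/P)^{2/3}. -/

import Mathlib

/-!
Slice `F` by the third coordinate. The slice `F_z` embeds both into `φ_A(F)` and into the product
of the slices of `φ_B(F)` and `φ_C(F)` at `z`, so `|F_z| ≤ √(|φ_A(F)| |φ_B(F)_z| |φ_C(F)_z|)`;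
summing over `z` and applying Cauchy–Schwarz gives Loomis–Whitney,
`|F|² ≤ |φ_A(F)| |φ_B(F)| |φ_C(F)|`. Since `|F| ≥ n₁n₂n₃/P = mnk/P`, the product of the three
projection sizes is at least `(mnk/P)²`, and AM–GM turns this into the bound `3 (mnk/P)^{2/3}` on
their sum.
-/

open Finset

section LoomisWhitney

variable {α β γ : Type*} [DecidableEq γ] (F : Finset (α × β × γ))

lemma card_image_eq_sum_card_slice {δ : Type*} [DecidableEq δ] (f : α × β × γ → δ × γ)
    (hf : ∀ t, (f t).2 = t.2.2) :
    #(F.image f) = ∑ z ∈ F.image (fun t => t.2.2), #{b ∈ F.image f | b.2 = z} := by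
  refine card_eq_sum_card_fiberwise fun b hb => ?_
  obtain ⟨t, ht, rfl⟩ := mem_image.1 hb
  simpa only [mem_coe, hf] using mem_image_of_mem (fun t => t.2.2) ht

variable [DecidableEq α] [DecidableEq β]

lemma card_slice_le_card_image_fst_snd_fst (z : γ) :
    #{t ∈ F | t.2.2 = z} ≤ #(F.image fun t => (t.1, t.2.1)) := by
  refine card_le_card_of_injOn (fun t => (t.1, t.2.1))
    (fun t ht => mem_image_of_mem _ (mem_filter.1 ht).1) ?_
  intro t ht s hs hts
  obtain ⟨h1, h2⟩ := Prod.mk.inj hts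
  exact Prod.ext h1 (Prod.ext h2 ((mem_filter.1 ht).2.trans (mem_filter.1 hs).2.symm))

lemma card_slice_le_mul_card_slice_image (z : γ) :
    #{t ∈ F | t.2.2 = z} ≤
      #{b ∈ F.image (fun t => (t.2.1, t.2.2)) | b.2 = z} *
        #{c ∈ F.image (fun t => (t.1, t.2.2)) | c.2 = z} := by
  rw [← card_product]
  refine card_le_card_of_injOn (fun t => ((t.2.1, t.2.2), (t.1, t.2.2))) ?_ ?_
  · intro t ht
    obtain ⟨htF, htz⟩ := mem_filter.1 ht
    exact mem_product.2 ⟨mem_filter.2 ⟨mem_image_of_mem _ htF, htz⟩,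
      mem_filter.2 ⟨mem_image_of_mem _ htF, htz⟩⟩
  · intro t _ s _ hts
    obtain ⟨hbc, hac⟩ := Prod.mk.inj hts
    exact Prod.ext (Prod.mk.inj hac).1 hbc

theorem loomis_whitney :
    #F ^ 2 ≤ #(F.image fun t => (t.1, t.2.1)) * #(F.image fun t => (t.2.1, t.2.2)) *
      #(F.image fun t => (t.1, t.2.2)) := by
  set a := #(F.image fun t => (t.1, t.2.1))
  set Z := F.image fun t => t.2.2
  set b := fun z => #{b ∈ F.image (fun t => (t.2.1, t.2.2)) | b.2 = z}
  set c := fun z => #{c ∈ F.image (fun t => (t.1, t.2.2)) | c.2 = z}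
  have hB := card_image_eq_sum_card_slice F (fun t => (t.2.1, t.2.2)) fun _ => rfl
  have hC := card_image_eq_sum_card_slice F (fun t => (t.1, t.2.2)) fun _ => rfl
  have hslice (z : γ) : (#{t ∈ F | t.2.2 = z} : ℝ) ≤ √a * (√(b z) * √(c z)) := by
    rw [← Real.sqrt_mul (Nat.cast_nonneg _), ← Real.sqrt_mul (Nat.cast_nonneg _)]
    refine Real.le_sqrt_of_sq_le ?_
    rw [sq]
    exact_mod_cast Nat.mul_le_mul (card_slice_le_card_image_fst_snd_fst F z)
      (card_slice_le_mul_card_slice_image F z)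
  have hsum : (#F : ℝ) ≤ √a * (√(∑ z ∈ Z, (b z : ℝ)) * √(∑ z ∈ Z, (c z : ℝ))) := calc
    (#F : ℝ) = ∑ z ∈ Z, (#{t ∈ F | t.2.2 = z} : ℝ) := by
      exact_mod_cast card_eq_sum_card_fiberwise fun t ht => mem_image_of_mem _ ht
    _ ≤ ∑ z ∈ Z, √a * (√(b z) * √(c z)) := sum_le_sum fun z _ => hslice z
    _ ≤ _ := by
      rw [← mul_sum]
      gcongr
      exact Real.sum_sqrt_mul_sqrt_le Z (fun _ => Nat.cast_nonneg _) (fun _ => Nat.cast_nonneg _)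
  rw [← Nat.cast_sum, ← Nat.cast_sum, ← hB, ← hC] at hsum
  have hsq := pow_le_pow_left₀ (Nat.cast_nonneg _) hsum 2
  rw [mul_pow, mul_pow, Real.sq_sqrt (Nat.cast_nonneg _), Real.sq_sqrt (Nat.cast_nonneg _),
    Real.sq_sqrt (Nat.cast_nonneg _), ← mul_assoc] at hsq
  exact_mod_cast hsq

end LoomisWhitney

lemma three_mul_rpow_two_thirds_le_add {x a b c : ℝ} (hx : 0 ≤ x) (ha : 0 ≤ a) (hb : 0 ≤ b)
    (hc : 0 ≤ c) (h : x ^ 2 ≤ a * b * c) : 3 * x ^ ((2 : ℝ) / 3) ≤ a + b + c := by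
  have hgm : (a * b * c) ^ ((1 : ℝ) / 3) ≤ (1 / 3) * a + (1 / 3) * b + (1 / 3) * c := by
    rw [Real.mul_rpow (by positivity) hc, Real.mul_rpow ha hb]
    exact Real.geom_mean_le_arith_mean3_weighted (by norm_num) (by norm_num) (by norm_num)
      ha hb hc (by norm_num)
  have hx23 : x ^ ((2 : ℝ) / 3) ≤ (a * b * c) ^ ((1 : ℝ) / 3) := calc
    x ^ ((2 : ℝ) / 3) = (x ^ 2) ^ ((1 : ℝ) / 3) := by
      rw [← Real.rpow_natCast, ← Real.rpow_mul hx]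
      norm_num
    _ ≤ _ := by gcongr
  linarith

lemma max_mul_median_mul_min (a b c : ℕ) :
    max a (max b c) * (a + b + c - max a (max b c) - min a (min b c)) * min a (min b c) =
      a * b * c := by
  grind

theorem stmt_9_general (n1 n2 n3 : ℕ) (m n k : ℕ)
    (hm : m = max n1 (max n2 n3)) (hk : k = min n1 (min n2 n3))
    (hn : n = n1 + n2 + n3 - m - k)
    (P : ℝ) (hP1 : 1 ≤ P)
    (F : Finset (ℕ × ℕ × ℕ))
    (hcard : (n1 * n2 * n3 : ℝ) / P ≤ F.card) :
    3 * ((m : ℝ) * n * k / P) ^ ((2 : ℝ) / 3) ≤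
      ((F.image fun t => (t.1, t.2.1)).card : ℝ) +
        (F.image fun t => (t.2.1, t.2.2)).card +
        (F.image fun t => (t.1, t.2.2)).card := by
  have hmnk : (m * n * k : ℝ) = n1 * n2 * n3 := by
    subst hm hk hn
    exact_mod_cast max_mul_median_mul_min n1 n2 n3
  refine three_mul_rpow_two_thirds_le_add (by positivity) (Nat.cast_nonneg _)
    (Nat.cast_nonneg _) (Nat.cast_nonneg _) ?_
  calc ((m : ℝ) * n * k / P) ^ 2 ≤ (#F : ℝ) ^ 2 := by
        rw [hmnk]
        gcongr
    _ ≤ _ := by exact_mod_cast loomis_whitney F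

/-- Data-access lower bound, case 3 (`P ≥ mn/k²`, `P ≥ 1`): if a processor is
assigned a set `F` of at least `n₁n₂n₃/P` lattice points of the matrix
multiplication iteration space, then the total size of the three projections
of `F` is at least `3(mnk/P)^{2/3}`, where `m ≥ n ≥ k` are the sorted
dimensions. -/
theorem stmt_9 (n1 n2 n3 : ℕ) (hn1 : 0 < n1) (hn2 : 0 < n2) (hn3 : 0 < n3)
    (m n k : ℕ)
    (hm : m = max n1 (max n2 n3)) (hk : k = min n1 (min n2 n3))
    (hn : n = n1 + n2 + n3 - m - k)
    (P : ℝ) (hP1 : 1 ≤ P) (hP2 : (m : ℝ) * n / (k : ℝ) ^ 2 ≤ P)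
    (F : Finset (ℕ × ℕ × ℕ))
    (hF : ∀ t ∈ F, (1 ≤ t.1 ∧ t.1 ≤ n1) ∧ (1 ≤ t.2.1 ∧ t.2.1 ≤ n2) ∧
      (1 ≤ t.2.2 ∧ t.2.2 ≤ n3))
    (hcard : (n1 * n2 * n3 : ℝ) / P ≤ F.card) :
    3 * ((m : ℝ) * n * k / P) ^ ((2 : ℝ) / 3) ≤
      ((F.image fun t => (t.1, t.2.1)).card : ℝ) +
        (F.image fun t => (t.2.1, t.2.2)).card +
        (F.image fun t => (t.1, t.2.2)).card :=
  stmt_9_general n1 n2 n3 m n k hm hk hn P hP1 F hcard
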